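/- In the two-dimensional setting with γ_k ∈ (0,1) for all k ≥ 2, set M_k = log q_k, θ = (1 + √7 i)/2 ∈ ℂ, and ξ₂ = M₂ + (θ − 1)M₁. If |ξ₂| > 8 log λ, then the sequence {‖g_k‖} converges to zero R-superlinearly; in particular, lim_{k→∞} ‖g_k‖^{1/k} = 0, where ‖g_j‖ = √((g_j⁽¹⁾)² + (g_j⁽²⁾)²). -/

import Mathlib

/-!
Write `a_k = 1 - α_k` and `b_k = λ α_k - 1`. Both are positive, `a_k ≤ λ² min(1, 1/q_{k-1})`,
`b_k ≤ λ² min(1, q_{k-1})`, and `q_{k+1} = (a_k / b_k)² q_k` with `a_k q_{k-1} / b_k ∈ (1, λ)`.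
Hence `M_{k+1} - M_k + 2 M_{k-1} ∈ (0, 2 log λ)`, i.e. `ξ_k = M_{k+1} + (θ - 1) M_k` satisfies
`ξ_{k+1} = θ ξ_k + O(log λ)`. As `|θ| = √2`, once `|ξ|` exceeds the fixed point `2 (√2 + 1) log λ`
it grows like `√2^k`. For every `u`, one of `u, θu, θ²u, θ³u` has imaginary part at least `|u|/5`;
since `Im ξ_k = (√7/2) M_k`, every window of four consecutive `M_k` contains a value
`≥ c √2^k - c'` and one `≤ -(c √2^k - c')`. Feeding these into the bounds on `a_k` and `b_k` gives
`‖g_k‖ ≤ C λ^{2k} exp(-c √2^k)`, whose `k`-th root tends to `0`.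
-/

open Filter Real Topology Set

-- A convex combination of the two Barzilai–Borwein step sizes for `diag(1, lam)`, evaluated at a
-- gradient with squared component ratio `r`.
noncomputable def bbStep (lam γ r : ℝ) : ℝ :=
  γ * (1 + r) / (lam + r) + (1 - γ) * (lam + r) / (lam ^ 2 + r)

section bbStep

variable {lam γ r : ℝ}

lemma exp_neg_posPart_log (hr : 0 < r) : exp (-(log r)⁺) = (max 1 r)⁻¹ := by
  rcases le_total r 1 with h | h
  · rw [posPart_eq_zero.2 (log_nonpos hr.le h), max_eq_left h]; simp
  · rw [posPart_eq_self.2 (log_nonneg h), max_eq_right h, exp_neg, exp_log hr]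

lemma exp_neg_negPart_log (hr : 0 < r) : exp (-(log r)⁻) = min 1 r := by
  rcases le_total r 1 with h | h
  · rw [negPart_eq_neg.2 (log_nonpos hr.le h), min_eq_right h, neg_neg, exp_log hr]
  · rw [negPart_eq_zero.2 (log_nonneg h), min_eq_left h]; simp

lemma one_sub_bbStep (hlam : 0 < lam) (hr : 0 < r) :
    1 - bbStep lam γ r = (lam - 1) * (γ / (lam + r) + (1 - γ) * lam / (lam ^ 2 + r)) := by
  unfold bbStep
  field_simp
  ring

lemma mul_bbStep_sub_one (hlam : 0 < lam) (hr : 0 < r) :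
    lam * bbStep lam γ r - 1 = (lam - 1) * r * (γ / (lam + r) + (1 - γ) / (lam ^ 2 + r)) := by
  unfold bbStep
  field_simp
  ring

lemma one_sub_bbStep_pos (hlam : 1 < lam) (hγ : γ ∈ Ioo 0 1) (hr : 0 < r) :
    0 < 1 - bbStep lam γ r := by
  rw [one_sub_bbStep (by linarith) hr]
  have := sub_pos.2 hγ.2
  have := sub_pos.2 hlam
  have := hγ.1
  positivity

lemma mul_bbStep_sub_one_pos (hlam : 1 < lam) (hγ : γ ∈ Ioo 0 1) (hr : 0 < r) :
    0 < lam * bbStep lam γ r - 1 := by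
  rw [mul_bbStep_sub_one (by linarith) hr]
  have := sub_pos.2 hγ.2
  have := sub_pos.2 hlam
  have := hγ.1
  positivity

lemma abs_one_sub_bbStep_le (hlam : 1 < lam) (hγ : γ ∈ Ioo 0 1) (hr : 0 < r) :
    |1 - bbStep lam γ r| ≤ lam ^ 2 * exp (-(log r)⁺) := by
  obtain ⟨hγ0, hγ1⟩ := hγ
  rw [abs_of_pos (one_sub_bbStep_pos hlam ⟨hγ0, hγ1⟩ hr), exp_neg_posPart_log hr,
    one_sub_bbStep (by linarith) hr]
  have hD : γ / (lam + r) + (1 - γ) * lam / (lam ^ 2 + r) ≤ lam / (lam + r) := by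
    calc γ / (lam + r) + (1 - γ) * lam / (lam ^ 2 + r)
        ≤ γ * lam / (lam + r) + (1 - γ) * lam / (lam + r) := by
          gcongr <;> nlinarith
      _ = lam / (lam + r) := by ring
  calc (lam - 1) * (γ / (lam + r) + (1 - γ) * lam / (lam ^ 2 + r))
      ≤ lam * (lam / max 1 r) := by
        gcongr
        · linarith
        · exact hD.trans (div_le_div_of_nonneg_left (by linarith) (by positivity)
            (max_le (by linarith) (by linarith)))
    _ = lam ^ 2 * (max 1 r)⁻¹ := by ring

lemma abs_one_sub_mul_bbStep_le (hlam : 1 < lam) (hγ : γ ∈ Ioo 0 1) (hr : 0 < r) :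
    |1 - lam * bbStep lam γ r| ≤ lam ^ 2 * exp (-(log r)⁻) := by
  obtain ⟨hγ0, hγ1⟩ := hγ
  rw [abs_sub_comm, abs_of_pos (mul_bbStep_sub_one_pos hlam ⟨hγ0, hγ1⟩ hr),
    exp_neg_negPart_log hr, mul_bbStep_sub_one (by linarith) hr]
  have hD : γ / (lam + r) + (1 - γ) / (lam ^ 2 + r) ≤ 1 / (lam + r) := by
    calc γ / (lam + r) + (1 - γ) / (lam ^ 2 + r)
        ≤ γ / (lam + r) + (1 - γ) / (lam + r) := by
          gcongr
          nlinarith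
      _ = 1 / (lam + r) := by ring
  have hmin : r / (lam + r) ≤ min 1 r := by
    apply le_min
    · rw [div_le_one (by linarith)]; linarith
    · exact div_le_self hr.le (by linarith)
  calc (lam - 1) * r * (γ / (lam + r) + (1 - γ) / (lam ^ 2 + r))
      ≤ lam ^ 2 * (r / (lam + r)) := by
        rw [mul_assoc]
        gcongr
        · nlinarith
        · calc r * (γ / (lam + r) + (1 - γ) / (lam ^ 2 + r))
              ≤ r * (1 / (lam + r)) := by gcongr
            _ = r / (lam + r) := by ring
    _ ≤ lam ^ 2 * min 1 r := by gcongr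

lemma bbStep_ratio_mem_Ioo (hlam : 1 < lam) (hγ : γ ∈ Ioo 0 1) (hr : 0 < r) :
    (1 - bbStep lam γ r) * r / (lam * bbStep lam γ r - 1) ∈ Ioo 1 lam := by
  obtain ⟨hγ0, hγ1⟩ := hγ
  have hl : 0 < lam - 1 := by linarith
  have hγ1' : 0 < 1 - γ := by linarith
  set D₁ := γ / (lam + r) + (1 - γ) * lam / (lam ^ 2 + r) with hD₁
  set D₂ := γ / (lam + r) + (1 - γ) / (lam ^ 2 + r) with hD₂
  have hD₂pos : 0 < D₂ := by positivity
  have hgap₁ : D₁ - D₂ = (1 - γ) * (lam - 1) / (lam ^ 2 + r) := by rw [hD₁, hD₂]; ring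
  have hgap₂ : lam * D₂ - D₁ = γ * (lam - 1) / (lam + r) := by rw [hD₁, hD₂]; ring
  have hdiv : (lam - 1) * D₁ * r / ((lam - 1) * r * D₂) = D₁ / D₂ := by field_simp
  rw [one_sub_bbStep (by linarith) hr, mul_bbStep_sub_one (by linarith) hr, hdiv, mem_Ioo,
    one_lt_div hD₂pos, div_lt_iff₀ hD₂pos]
  constructor
  · have : 0 < (1 - γ) * (lam - 1) / (lam ^ 2 + r) := by positivity
    linarith
  · have : 0 < γ * (lam - 1) / (lam + r) := by positivity
    linarith

lemma log_sq_div_sq_bbStep_mem_Ioo (hlam : 1 < lam) (hγ : γ ∈ Ioo 0 1) (hr : 0 < r) {x y : ℝ}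
    (hx : x ≠ 0) (hy : y ≠ 0) :
    log (((1 - bbStep lam γ r) * x) ^ 2 / ((1 - lam * bbStep lam γ r) * y) ^ 2)
      - log (x ^ 2 / y ^ 2) + 2 * log r ∈ Ioo 0 (2 * log lam) := by
  set a := bbStep lam γ r
  obtain ⟨hρ1, hρlam⟩ := bbStep_ratio_mem_Ioo hlam hγ hr
  have ha := one_sub_bbStep_pos hlam hγ hr
  have hb := mul_bbStep_sub_one_pos hlam hγ hr
  have hsplit : ((1 - a) * x) ^ 2 / ((1 - lam * a) * y) ^ 2
      = ((1 - a) * r / (lam * a - 1)) ^ 2 * (x ^ 2 / y ^ 2) / r ^ 2 := by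
    field_simp
    ring
  rw [hsplit, log_div (by positivity) (by positivity), log_mul (by positivity) (by positivity),
    log_pow, log_pow]
  push_cast
  refine ⟨by linarith [log_pos hρ1], by linarith [log_lt_log (by linarith) hρlam]⟩

end bbStep

noncomputable def theta : ℂ := (1 + √7 * Complex.I) / 2

lemma theta_re : theta.re = 1 / 2 := by simp [theta]
lemma theta_im : theta.im = √7 / 2 := by simp [theta]

lemma theta_sq : theta ^ 2 = theta - 2 := by
  have h7 : ((√7 : ℝ) : ℂ) ^ 2 = 7 := by norm_cast; exact sq_sqrt (by norm_num)
  rw [theta]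
  linear_combination (Complex.I ^ 2 / 4) * h7 + (7 / 4 : ℂ) * Complex.I_sq

lemma norm_theta : ‖theta‖ = √2 := by
  rw [Complex.norm_def, Complex.normSq_apply, theta_re, theta_im]
  congr 1
  linear_combination (mul_self_sqrt (by norm_num : (0 : ℝ) ≤ 7)) / 4

-- The arguments `0, φ, 2φ, 3φ` of `θ ^ d` (`φ = arg θ ≈ 69.3°`) leave gaps of at most
-- `360° - 3φ ≈ 152.1°`, so some `θ ^ d * u` has argument in `[13.9°, 166.1°]`, where `sin > 0.24`;
-- moreover `‖θ ^ d‖ ≥ 1`.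
lemma exists_le_im_theta_pow_mul (u : ℂ) : ∃ d ≤ 3, ‖u‖ / 5 ≤ (theta ^ d * u).im := by
  have h3 : theta ^ 3 = -theta - 2 := by linear_combination (theta + 1) * theta_sq
  have hρ : ‖u‖ ^ 2 = u.re ^ 2 + u.im ^ 2 := by rw [Complex.sq_norm, Complex.normSq_apply]; ring
  have h7 : √7 ^ 2 = 7 := sq_sqrt (by norm_num)
  by_contra! h
  have h0 := h 0 (by norm_num)
  have h1 := h 1 (by norm_num)
  have h2 := h 2 (by norm_num)
  have h3' := h 3 le_rfl
  rw [theta_sq] at h2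
  rw [h3] at h3'
  simp only [pow_zero, one_mul, pow_one, Complex.mul_im, Complex.sub_re, Complex.sub_im,
    Complex.neg_re, Complex.neg_im, theta_re, theta_im, Complex.re_ofNat, Complex.im_ofNat]
    at h0 h1 h2 h3'
  nlinarith [norm_nonneg u]

section Recurrence

variable {θ : ℂ} {ξ e : ℕ → ℂ} {B : ℝ} {n : ℕ}

lemma norm_sub_pow_mul_le (hrec : ∀ k, n ≤ k → ξ (k + 1) = θ * ξ k + e k)
    (he : ∀ k, n ≤ k → ‖e k‖ ≤ B) (d : ℕ) :
    ‖ξ (n + d) - θ ^ d * ξ n‖ ≤ B * ∑ i ∈ Finset.range d, ‖θ‖ ^ i := by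
  induction d with
  | zero => simp
  | succ d ih =>
    have hsplit :
        ξ (n + (d + 1)) - θ ^ (d + 1) * ξ n = θ * (ξ (n + d) - θ ^ d * ξ n) + e (n + d) := by
      rw [← add_assoc, hrec _ (Nat.le_add_right n d)]; ring
    calc ‖ξ (n + (d + 1)) - θ ^ (d + 1) * ξ n‖
        ≤ ‖θ‖ * ‖ξ (n + d) - θ ^ d * ξ n‖ + ‖e (n + d)‖ := by
          rw [hsplit, ← norm_mul]; exact norm_add_le _ _
      _ ≤ ‖θ‖ * (B * ∑ i ∈ Finset.range d, ‖θ‖ ^ i) + B := by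
          gcongr
          exact he _ (Nat.le_add_right n d)
      _ = B * ∑ i ∈ Finset.range (d + 1), ‖θ‖ ^ i := by
          rw [geom_sum_succ]; ring

lemma le_norm_of_affine_rec (hθ : 1 < ‖θ‖) (hrec : ∀ k, n ≤ k → ξ (k + 1) = θ * ξ k + e k)
    (he : ∀ k, n ≤ k → ‖e k‖ ≤ B) (j : ℕ) :
    (‖ξ n‖ - B / (‖θ‖ - 1)) * ‖θ‖ ^ j + B / (‖θ‖ - 1) ≤ ‖ξ (n + j)‖ := by
  induction j with
  | zero => simp
  | succ j ih =>
    have hsub : θ * ξ (n + j) = ξ (n + (j + 1)) - e (n + j) := by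
      rw [← add_assoc, hrec _ (Nat.le_add_right n j)]; ring
    have htri : ‖θ‖ * ‖ξ (n + j)‖ ≤ ‖ξ (n + (j + 1))‖ + B := by
      rw [← norm_mul, hsub]
      exact (norm_sub_le _ _).trans (by linarith [he _ (Nat.le_add_right n j)])
    have hfix : ‖θ‖ * (B / (‖θ‖ - 1)) - B = B / (‖θ‖ - 1) := by
      field_simp [(sub_pos.2 hθ).ne']; ring
    calc (‖ξ n‖ - B / (‖θ‖ - 1)) * ‖θ‖ ^ (j + 1) + B / (‖θ‖ - 1)
        = ‖θ‖ * ((‖ξ n‖ - B / (‖θ‖ - 1)) * ‖θ‖ ^ j + B / (‖θ‖ - 1)) - B := by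
          linear_combination -hfix
      _ ≤ ‖θ‖ * ‖ξ (n + j)‖ - B := by gcongr
      _ ≤ ‖ξ (n + (j + 1))‖ := by linarith

lemma exists_le_im_of_theta_rec (hB : 0 ≤ B)
    (hrec : ∀ k, n ≤ k → ξ (k + 1) = theta * ξ k + e k) (he : ∀ k, n ≤ k → ‖e k‖ ≤ B) (j : ℕ) :
    ∃ d ≤ 3, (‖ξ n‖ - (√2 + 1) * B) * √2 ^ j / 5 - (3 + √2) * B ≤ (ξ (n + j + d)).im := by
  have hs : 1 < √2 := by rw [lt_sqrt zero_le_one]; norm_num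
  have h2 : √2 ^ 2 = 2 := sq_sqrt zero_le_two
  obtain ⟨d, hd, hrot⟩ := exists_le_im_theta_pow_mul (ξ (n + j))
  refine ⟨d, hd, ?_⟩
  have hgrow := le_norm_of_affine_rec (norm_theta ▸ hs) hrec he j
  rw [norm_theta, show B / (√2 - 1) = (√2 + 1) * B by
    field_simp [(sub_pos.2 hs).ne']; linear_combination -B * h2] at hgrow
  have hwin := norm_sub_pow_mul_le (n := n + j) (fun k hk => hrec k (by omega))
    (fun k hk => he k (by omega)) d
  have hsum : ∑ i ∈ Finset.range d, ‖theta‖ ^ i ≤ 3 + √2 := by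
    calc ∑ i ∈ Finset.range d, ‖theta‖ ^ i ≤ ∑ i ∈ Finset.range 3, ‖theta‖ ^ i :=
          Finset.sum_le_sum_of_subset_of_nonneg (Finset.range_mono hd) fun _ _ _ => by positivity
      _ = 3 + √2 := by
        simp only [Finset.sum_range_succ, Finset.sum_range_zero, norm_theta, h2, pow_zero, pow_one]
        ring
  have him := (abs_le.1 ((Complex.abs_im_le_norm _).trans hwin)).1
  rw [Complex.sub_im] at him
  have : 0 ≤ (√2 + 1) * B := by positivity
  linarith [mul_le_mul_of_nonneg_left hsum hB]

lemma exists_pow_le_of_perturbed_rec {M : ℕ → ℝ} (hB : 0 ≤ B)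
    (hM : ∀ k, n ≤ k → |M (k + 2) - M (k + 1) + 2 * M k| ≤ B)
    (hξ : (√2 + 1) * B < ‖(M (n + 1) : ℂ) + (theta - 1) * M n‖) :
    ∃ c > 0, ∃ c', ∀ j, (∃ d ≤ 3, c * √2 ^ j - c' ≤ M (n + j + d)) ∧
      ∃ d ≤ 3, c * √2 ^ j - c' ≤ -M (n + j + d) := by
  set ξ : ℕ → ℂ := fun k => (M (k + 1) : ℂ) + (theta - 1) * M k with hξdef
  set δ := ‖ξ n‖ - (√2 + 1) * B
  have hδ : 0 < δ := sub_pos.2 hξ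
  set e : ℕ → ℂ := fun k => ((M (k + 2) - M (k + 1) + 2 * M k : ℝ) : ℂ) with hedef
  -- `θ (θ - 1) = -2` turns the three-term recurrence for `M` into a first-order one for `ξ`.
  have hrec : ∀ k, n ≤ k → ξ (k + 1) = theta * ξ k + e k := by
    intro k _
    simp only [hξdef, hedef]
    push_cast
    linear_combination (-(M k : ℂ)) * theta_sq
  have he : ∀ k, n ≤ k → ‖e k‖ ≤ B := by
    intro k hk
    rw [hedef, Complex.norm_real, Real.norm_eq_abs]
    exact hM k hk
  have him : ∀ k, (ξ k).im = √7 / 2 * M k := by simp [hξdef, theta_im]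
  refine ⟨2 * δ / (5 * √7), by positivity, 2 * (3 + √2) * B / √7, fun j => ?_⟩
  have hconv : ∀ x : ℝ, δ * √2 ^ j / 5 - (3 + √2) * B ≤ √7 / 2 * x →
      2 * δ / (5 * √7) * √2 ^ j - 2 * (3 + √2) * B / √7 ≤ x := by
    intro x hx
    calc 2 * δ / (5 * √7) * √2 ^ j - 2 * (3 + √2) * B / √7
        = (δ * √2 ^ j / 5 - (3 + √2) * B) / (√7 / 2) := by field_simp
      _ ≤ x := by rw [div_le_iff₀ (by positivity)]; linarith
  constructor
  · obtain ⟨d, hd, h⟩ := exists_le_im_of_theta_rec hB hrec he j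
    exact ⟨d, hd, hconv _ (by rwa [him] at h)⟩
  · obtain ⟨d, hd, h⟩ := exists_le_im_of_theta_rec (ξ := -ξ) (e := -e) (n := n) hB
      (fun k hk => by simp only [Pi.neg_apply, hrec k hk]; ring)
      (fun k hk => by rw [Pi.neg_apply, norm_neg]; exact he k hk) j
    rw [Pi.neg_apply, Pi.neg_apply, norm_neg, Complex.neg_im, him] at h
    exact ⟨d, hd, hconv _ (by linarith)⟩

end Recurrence

lemma abs_le_pow_mul_exp_of_abs_succ_le {x a : ℕ → ℝ} {C : ℝ} {n : ℕ} (hC : 1 ≤ C)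
    (ha : ∀ k, 0 ≤ a k) (h : ∀ k, n ≤ k → |x (k + 1)| ≤ C * exp (-a k) * |x k|) {i k : ℕ}
    (hi : i ∈ Finset.Ico n k) : |x k| ≤ C ^ k * exp (-a i) * |x n| := by
  have hprod :
      ∀ k, n ≤ k → |x k| ≤ C ^ (k - n) * exp (-∑ j ∈ Finset.Ico n k, a j) * |x n| := by
    intro k hk
    induction k, hk using Nat.le_induction with
    | base => simp
    | succ k hk ih =>
      rw [Finset.sum_Ico_succ_top hk, Nat.sub_add_comm hk, pow_succ, neg_add, exp_add]
      calc |x (k + 1)| ≤ C * exp (-a k) * |x k| := h k hk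
        _ ≤ C * exp (-a k) * (C ^ (k - n) * exp (-∑ j ∈ Finset.Ico n k, a j) * |x n|) := by
          gcongr
        _ = _ := by ring
  obtain ⟨hni, hik⟩ := Finset.mem_Ico.1 hi
  calc |x k| ≤ C ^ (k - n) * exp (-∑ j ∈ Finset.Ico n k, a j) * |x n| := hprod k (by omega)
    _ ≤ C ^ k * exp (-a i) * |x n| := by
      gcongr
      · exact Nat.sub_le k n
      · exact Finset.single_le_sum (fun j _ => ha j) hi

lemma tendsto_pow_div_natCast_atTop {s : ℝ} (hs : 1 < s) :
    Tendsto (fun k : ℕ => s ^ k / k) atTop atTop := by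
  have hpos : ∀ᶠ k : ℕ in atTop, 0 < (k : ℝ) ^ 1 / s ^ k := by
    filter_upwards [eventually_gt_atTop 0] with k hk
    have : 0 < s := by linarith
    positivity
  refine (tendsto_inv_nhdsGT_zero.comp (tendsto_nhdsWithin_iff.2
    ⟨tendsto_pow_const_div_const_pow_of_one_lt 1 hs, hpos⟩)).congr fun k => ?_
  simp

lemma tendsto_rpow_one_div_zero_of_le {u : ℕ → ℝ} {A P c s : ℝ} (N : ℕ) (hu : ∀ k, 0 ≤ u k)
    (hA : 0 < A) (hP : 0 < P) (hc : 0 < c) (hs : 1 < s)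
    (h : ∀ j, u (j + N) ≤ A * P ^ (j + N) * exp (-(c * s ^ j))) :
    Tendsto (fun k : ℕ => u k ^ ((1 : ℝ) / k)) atTop (𝓝 0) := by
  have hs0 : 0 < s := by linarith
  have h' : ∀ k, N ≤ k → u k ≤ A * P ^ k * exp (-(c / s ^ N * s ^ k)) := by
    intro k hk
    obtain ⟨j, rfl⟩ := Nat.exists_eq_add_of_le' hk
    convert h j using 4
    rw [pow_add]
    field_simp
  have hA' : Tendsto (fun k : ℕ => A ^ ((1 : ℝ) / k)) atTop (𝓝 1) := by
    simpa using tendsto_const_nhds.rpow tendsto_one_div_atTop_nhds_zero_nat (Or.inl hA.ne')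
  have hexp : Tendsto (fun k : ℕ => exp (-(c / s ^ N * (s ^ k / k)))) atTop (𝓝 0) :=
    tendsto_exp_atBot.comp <| tendsto_neg_atTop_atBot.comp <|
      (tendsto_pow_div_natCast_atTop hs).const_mul_atTop (by positivity)
  refine squeeze_zero' (g := fun k : ℕ => A ^ ((1 : ℝ) / k) * P * exp (-(c / s ^ N * (s ^ k / k))))
    (.of_forall fun k => rpow_nonneg (hu k) _) ?_ (by simpa using (hA'.mul_const P).mul hexp)
  filter_upwards [eventually_ge_atTop N, eventually_gt_atTop 0] with k hkN hk
  have hPk : (P ^ k) ^ ((1 : ℝ) / k) = P := by rw [one_div, pow_rpow_inv_natCast hP.le hk.ne']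
  calc u k ^ ((1 : ℝ) / k) ≤ (A * P ^ k * exp (-(c / s ^ N * s ^ k))) ^ ((1 : ℝ) / k) :=
        rpow_le_rpow (hu k) (h' k hkN) (by positivity)
    _ = A ^ ((1 : ℝ) / k) * P * exp (-(c / s ^ N * (s ^ k / k))) := by
        rw [mul_rpow (by positivity) (by positivity), mul_rpow hA.le (by positivity), hPk,
          ← exp_mul]
        congr 2
        field_simp

-- The gradient method `g_{k+1} = (I - α_k diag(1, lam)) g_k` for a quadratic with Hessian
-- `diag(1, lam)`, with step sizes `bbStep` built from the previous gradient.
structure IsDelayedBBIteration (lam : ℝ) (γ g1 g2 q α : ℕ → ℝ) : Prop where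
  one_lt : 1 < lam
  mem_Ioo : ∀ k, 2 ≤ k → γ k ∈ Ioo 0 1
  ratio_eq : ∀ j, q j = g1 j ^ 2 / g2 j ^ 2
  step_eq : ∀ k, 2 ≤ k → α k = bbStep lam (γ k) (q (k - 1))
  succ_fst : ∀ k, 2 ≤ k → g1 (k + 1) = (1 - α k) * g1 k
  succ_snd : ∀ k, 2 ≤ k → g2 (k + 1) = (1 - lam * α k) * g2 k

namespace IsDelayedBBIteration

variable {lam : ℝ} {γ g1 g2 q α : ℕ → ℝ}

lemma ratio_pos (h : IsDelayedBBIteration lam γ g1 g2 q α) {k : ℕ}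
    (hk : g1 k ≠ 0 ∧ g2 k ≠ 0) : 0 < q k := by
  obtain ⟨h1, h2⟩ := hk
  rw [h.ratio_eq]
  positivity

lemma ne_zero (h : IsDelayedBBIteration lam γ g1 g2 q α) (h11 : g1 1 ≠ 0) (h21 : g2 1 ≠ 0)
    (h12 : g1 2 ≠ 0) (h22 : g2 2 ≠ 0) : ∀ k, 1 ≤ k → g1 k ≠ 0 ∧ g2 k ≠ 0 := by
  suffices ∀ k, 1 ≤ k → (g1 k ≠ 0 ∧ g2 k ≠ 0) ∧ g1 (k + 1) ≠ 0 ∧ g2 (k + 1) ≠ 0 from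
    fun k hk => (this k hk).1
  intro k hk
  induction k, hk using Nat.le_induction with
  | base => exact ⟨⟨h11, h21⟩, h12, h22⟩
  | succ k hk ih =>
    obtain ⟨hne, h1, h2⟩ := ih
    have hq := h.ratio_pos hne
    have hγ := h.mem_Ioo (k + 1) (by omega)
    refine ⟨⟨h1, h2⟩, ?_, ?_⟩
    · rw [h.succ_fst _ (by omega), h.step_eq _ (by omega), Nat.add_sub_cancel]
      exact mul_ne_zero (one_sub_bbStep_pos h.one_lt hγ hq).ne' h1
    · rw [h.succ_snd _ (by omega), h.step_eq _ (by omega), Nat.add_sub_cancel]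
      exact mul_ne_zero (by linarith [mul_bbStep_sub_one_pos h.one_lt hγ hq]) h2

lemma abs_log_ratio_rec_le (h : IsDelayedBBIteration lam γ g1 g2 q α)
    (hne : ∀ k, 1 ≤ k → g1 k ≠ 0 ∧ g2 k ≠ 0) {k : ℕ} (hk : 1 ≤ k) :
    |log (q (k + 2)) - log (q (k + 1)) + 2 * log (q k)| ≤ 2 * log lam := by
  obtain ⟨h1, h2⟩ := hne (k + 1) (by omega)
  obtain ⟨h0, hlt⟩ := log_sq_div_sq_bbStep_mem_Ioo h.one_lt (h.mem_Ioo (k + 1) (by omega))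
    (h.ratio_pos (hne k hk)) h1 h2
  have hα : α (k + 1) = bbStep lam (γ (k + 1)) (q k) := h.step_eq (k + 1) (by omega)
  rw [← hα, ← h.succ_fst (k + 1) (by omega), ← h.succ_snd (k + 1) (by omega), ← h.ratio_eq,
    ← h.ratio_eq] at h0 hlt
  exact abs_le.2 ⟨by linarith, hlt.le⟩

lemma abs_succ_fst_le (h : IsDelayedBBIteration lam γ g1 g2 q α)
    (hne : ∀ k, 1 ≤ k → g1 k ≠ 0 ∧ g2 k ≠ 0) {k : ℕ} (hk : 2 ≤ k) :
    |g1 (k + 1)| ≤ lam ^ 2 * exp (-(log (q (k - 1)))⁺) * |g1 k| := by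
  rw [h.succ_fst k hk, abs_mul, h.step_eq k hk]
  exact mul_le_mul_of_nonneg_right (abs_one_sub_bbStep_le h.one_lt (h.mem_Ioo k hk)
    (h.ratio_pos (hne _ (by omega)))) (abs_nonneg _)

lemma abs_succ_snd_le (h : IsDelayedBBIteration lam γ g1 g2 q α)
    (hne : ∀ k, 1 ≤ k → g1 k ≠ 0 ∧ g2 k ≠ 0) {k : ℕ} (hk : 2 ≤ k) :
    |g2 (k + 1)| ≤ lam ^ 2 * exp (-(log (q (k - 1)))⁻) * |g2 k| := by
  rw [h.succ_snd k hk, abs_mul, h.step_eq k hk]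
  exact mul_le_mul_of_nonneg_right (abs_one_sub_mul_bbStep_le h.one_lt (h.mem_Ioo k hk)
    (h.ratio_pos (hne _ (by omega)))) (abs_nonneg _)

lemma sqrt_sq_add_sq_le (h : IsDelayedBBIteration lam γ g1 g2 q α)
    (hne : ∀ k, 1 ≤ k → g1 k ≠ 0 ∧ g2 k ≠ 0) {k i i' : ℕ} {w : ℝ}
    (hi : 1 ≤ i ∧ i + 2 ≤ k) (hw : w ≤ log (q i)) (hi' : 1 ≤ i' ∧ i' + 2 ≤ k)
    (hw' : w ≤ -log (q i')) :
    √(g1 k ^ 2 + g2 k ^ 2) ≤ (|g1 2| + |g2 2|) * (lam ^ 2) ^ k * exp (-w) := by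
  have hC : 1 ≤ lam ^ 2 := one_le_pow₀ h.one_lt.le
  have hg1 := abs_le_pow_mul_exp_of_abs_succ_le hC (fun _ => posPart_nonneg _)
    (fun _ hk => h.abs_succ_fst_le hne hk) (i := i + 1) (k := k)
    (Finset.mem_Ico.2 ⟨by omega, by omega⟩)
  have hg2 := abs_le_pow_mul_exp_of_abs_succ_le hC (fun _ => negPart_nonneg _)
    (fun _ hk => h.abs_succ_snd_le hne hk) (i := i' + 1) (k := k)
    (Finset.mem_Ico.2 ⟨by omega, by omega⟩)
  simp only [Nat.add_sub_cancel] at hg1 hg2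
  have he1 : exp (-(log (q i))⁺) ≤ exp (-w) :=
    exp_le_exp.2 (by linarith [le_posPart (log (q i))])
  have he2 : exp (-(log (q i'))⁻) ≤ exp (-w) :=
    exp_le_exp.2 (by linarith [neg_le_negPart (log (q i'))])
  have hsqrt : √(g1 k ^ 2 + g2 k ^ 2) ≤ |g1 k| + |g2 k| := by
    rw [sqrt_le_iff, ← sq_abs (g1 k), ← sq_abs (g2 k)]
    exact ⟨by positivity, by nlinarith [abs_nonneg (g1 k), abs_nonneg (g2 k)]⟩
  calc √(g1 k ^ 2 + g2 k ^ 2) ≤ |g1 k| + |g2 k| := hsqrt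
    _ ≤ (lam ^ 2) ^ k * exp (-w) * |g1 2| + (lam ^ 2) ^ k * exp (-w) * |g2 2| :=
      add_le_add (hg1.trans (by gcongr)) (hg2.trans (by gcongr))
    _ = _ := by ring

end IsDelayedBBIteration

theorem stmt_16 (lam : ℝ) (hlam : 1 < lam)
    (γ : ℕ → ℝ) (hγ : ∀ k, 2 ≤ k → γ k ∈ Set.Ioo (0 : ℝ) 1)
    (g1 g2 : ℕ → ℝ)
    (hg11 : g1 1 ≠ 0) (hg21 : g2 1 ≠ 0) (hg12 : g1 2 ≠ 0) (hg22 : g2 2 ≠ 0)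
    (q : ℕ → ℝ) (hq : ∀ j, q j = (g1 j) ^ 2 / (g2 j) ^ 2)
    (α : ℕ → ℝ)
    (hα : ∀ k, 2 ≤ k → α k =
      γ k * (1 + q (k - 1)) / (lam + q (k - 1)) +
        (1 - γ k) * (lam + q (k - 1)) / (lam ^ 2 + q (k - 1)))
    (hup1 : ∀ k, 2 ≤ k → g1 (k + 1) = (1 - α k) * g1 k)
    (hup2 : ∀ k, 2 ≤ k → g2 (k + 1) = (1 - lam * α k) * g2 k)
    (M : ℕ → ℝ) (hM : ∀ j, M j = Real.log (q j))
    (θ : ℂ) (hθ : θ = (1 + Real.sqrt 7 * Complex.I) / 2)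
    (ξ2 : ℂ) (hξ2def : ξ2 = (M 2 : ℂ) + (θ - 1) * (M 1 : ℂ))
    (hξ2 : 8 * Real.log lam < ‖ξ2‖) :
    Filter.Tendsto
      (fun k : ℕ => (Real.sqrt ((g1 k) ^ 2 + (g2 k) ^ 2)) ^ ((1 : ℝ) / k))
      Filter.atTop (nhds 0) := by
  obtain rfl : θ = theta := hθ
  obtain rfl : M = fun j => log (q j) := funext hM
  have h : IsDelayedBBIteration lam γ g1 g2 q α := ⟨hlam, hγ, hq, hα, hup1, hup2⟩
  have hne := h.ne_zero hg11 hg21 hg12 hg22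
  have hs : 1 < √2 := by rw [lt_sqrt zero_le_one]; norm_num
  have hL : 0 < log lam := log_pos hlam
  have hξ : (√2 + 1) * (2 * log lam) < ‖(log (q 2) : ℂ) + (theta - 1) * log (q 1)‖ := by
    have : √2 < 3 := by rw [sqrt_lt' (by norm_num)]; norm_num
    have hξ2' : ξ2 = (log (q 2) : ℂ) + (theta - 1) * log (q 1) := hξ2def
    rw [← hξ2']
    nlinarith
  obtain ⟨c, hc, c', hbig⟩ := exists_pow_le_of_perturbed_rec (M := fun j => log (q j)) (n := 1)
    (by positivity) (fun k hk => h.abs_log_ratio_rec_le hne hk) hξ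
  refine tendsto_rpow_one_div_zero_of_le (A := (|g1 2| + |g2 2|) * exp c') (P := lam ^ 2) 6
    (fun _ => sqrt_nonneg _) (by positivity) (by positivity) hc hs fun j => ?_
  obtain ⟨⟨d, hd, hpos⟩, ⟨d', hd', hneg⟩⟩ := hbig j
  calc √(g1 (j + 6) ^ 2 + g2 (j + 6) ^ 2)
      ≤ (|g1 2| + |g2 2|) * (lam ^ 2) ^ (j + 6) * exp (-(c * √2 ^ j - c')) :=
        h.sqrt_sq_add_sq_le hne ⟨by omega, by omega⟩ hpos ⟨by omega, by omega⟩ hneg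
    _ = _ := by rw [neg_sub, sub_eq_add_neg, exp_add]; ring
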